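/- Let F_{[1:r]}, X_{[1:2]}, Y_{[1:2]} satisfy the Markov chains of T(r), and suppose W_1,...,W_r are random variables mutually independent of each other and of (F_{[1:r]}, X_{[1:2]}, Y_{[1:2]}). Define F̄_i = (F_i, W_i). Then F̄_{[1:r]}, X_{[1:2]}, Y_{[1:2]} also satisfy the Markov chains of T(r), and for each i, I(X_1; F̄_{[1:r]} | X_2) = I(X_1; F_{[1:r]} | X_2), I(X_2; F̄_{[1:r]} | X_1) = I(X_2; F_{[1:r]} | X_1), and I(F̄_{[1:r]}; Y_{[1:2]} | X_{[1:2]}) = I(F_{[1:r]}; Y_{[1:2]} | X_{[1:2]}). -/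

import Mathlib

open Finset

/-- Total variation distance between two pmfs on a finite set: half the ℓ¹ distance. -/
noncomputable def TV {α : Type*} [Fintype α] (p q : α → ℝ) : ℝ :=
  (∑ a, |p a - q a|) / 2

/-- Shannon entropy of a pmf. -/
noncomputable def ent {α : Type*} [Fintype α] (p : α → ℝ) : ℝ :=
  -∑ a, p a * Real.log (p a)

/-- Binary entropy function. -/
noncomputable def hb (t : ℝ) : ℝ := -t * Real.log t - (1 - t) * Real.log (1 - t)

/-- `p` is a probability mass function. -/
def IsPMF {α : Type*} [Fintype α] (p : α → ℝ) : Prop :=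
  (∀ a, 0 ≤ p a) ∧ ∑ a, p a = 1

/-- Pushforward pmf (distribution of the random variable `X` under `μ`). -/
noncomputable def pushf {Ω α : Type*} [Fintype Ω] [DecidableEq α]
    (μ : Ω → ℝ) (X : Ω → α) : α → ℝ :=
  fun a => ∑ ω ∈ Finset.univ.filter (fun ω => X ω = a), μ ω

/-- Entropy of a random variable `X` on a finite probability space with pmf `μ`. -/
noncomputable def Hent {Ω α : Type*} [Fintype Ω] [Fintype α] [DecidableEq α]
    (μ : Ω → ℝ) (X : Ω → α) : ℝ := ent (pushf μ X)

/-- Conditional mutual information `I(A ; C | B)` of random variables on a finite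
probability space with pmf `μ`, defined via entropies:
`I(A;C|B) = H(A,B) + H(B,C) - H(A,B,C) - H(B)`. -/
noncomputable def condMI {Ω α β γ : Type*} [Fintype Ω] [Fintype α] [Fintype β] [Fintype γ]
    [DecidableEq α] [DecidableEq β] [DecidableEq γ]
    (μ : Ω → ℝ) (A : Ω → α) (B : Ω → β) (C : Ω → γ) : ℝ :=
  Hent μ (fun ω => (A ω, B ω)) + Hent μ (fun ω => (B ω, C ω))
    - Hent μ (fun ω => (A ω, B ω, C ω)) - Hent μ B

/-!
Conditional mutual information, a signed sum of four joint entropies, is additive over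
independent triples: if `(A, B, C)` is independent of `(S, T, V)` then
`I(A S; C V | B T) = I(A; C | B) + I(S; V | T)`, because the entropy of a pair of independent
variables is the sum of their entropies. After re-encoding `F̄ = (F, W)` injectively, each
quantity of the theorem has this form, with `(S, T, V)` built from `W` and with `S` or `V`
constant, so the `W`-part vanishes.
-/

open Function Real

section

variable {Ω α β γ : Type*} [Fintype Ω]

lemma ent_eq_sum_negMulLog [Fintype α] (p : α → ℝ) : ent p = ∑ a, negMulLog (p a) := by
  simp [ent, negMulLog, Finset.sum_neg_distrib]

lemma ent_mul [Fintype α] [Fintype β] {p : α → ℝ} {q : β → ℝ}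
    (hp : ∑ a, p a = 1) (hq : ∑ b, q b = 1) :
    ent (fun z : α × β => p z.1 * q z.2) = ent p + ent q := by
  simp only [ent_eq_sum_negMulLog, negMulLog_mul, Fintype.sum_prod_type, sum_add_distrib,
    ← sum_mul, ← mul_sum, hp, hq, one_mul]

lemma sum_pushf [Fintype α] [DecidableEq α] (μ : Ω → ℝ) (X : Ω → α) :
    ∑ a, pushf μ X a = ∑ ω, μ ω :=
  sum_fiberwise _ _ _

lemma pushf_comp [Fintype α] [DecidableEq α] [DecidableEq β] (μ : Ω → ℝ) (X : Ω → α)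
    (g : α → β) : pushf μ (fun ω => g (X ω)) = pushf (pushf μ X) g := by
  funext b
  simp only [pushf]
  rw [← sum_fiberwise_of_maps_to (g := X) (t := univ.filter (g · = b)) (by simp)]
  refine sum_congr rfl fun a ha => ?_
  rw [filter_filter]
  congr 1; ext ω
  simp only [mem_filter, mem_univ, true_and] at ha ⊢
  exact ⟨fun h => h.2, fun h => ⟨h ▸ ha, h⟩⟩

lemma pushf_apply_injective [Fintype α] [DecidableEq β] (p : α → ℝ) {g : α → β}
    (hg : Injective g) (a : α) : pushf p g (g a) = p a := by
  rw [pushf, sum_eq_single_of_mem a (by simp)]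
  rintro a' ha' hne
  exact absurd (hg (mem_filter.1 ha').2) hne

lemma ent_pushf_injective [Fintype α] [Fintype β] [DecidableEq β] (p : α → ℝ) {g : α → β}
    (hg : Injective g) : ent (pushf p g) = ent p := by
  rw [ent_eq_sum_negMulLog, ent_eq_sum_negMulLog]
  refine (Fintype.sum_of_injective g hg _ _ ?_ fun a => by rw [pushf_apply_injective p hg]).symm
  rintro b hb
  rw [pushf, sum_eq_zero, negMulLog_zero]
  rintro a ha
  exact absurd ⟨a, (mem_filter.1 ha).2⟩ hb

lemma pushf_fst_mul [Fintype α] [Fintype β] [DecidableEq α] (p : α → ℝ) (q : β → ℝ) :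
    pushf (fun z : α × β => p z.1 * q z.2) Prod.fst = fun a => p a * ∑ b, q b := by
  funext a
  rw [pushf, ← univ_product_univ, filter_product_left (· = a), sum_product, mul_sum,
    filter_eq' univ a, if_pos (mem_univ a), sum_singleton]

lemma pushf_prodMap_mul [Fintype α] [Fintype β] [DecidableEq γ] {δ : Type*} [DecidableEq δ]
    (p : α → ℝ) (q : β → ℝ) (u : α → γ) (v : β → δ) :
    pushf (fun z : α × β => p z.1 * q z.2) (Prod.map u v)
      = fun z => pushf p u z.1 * pushf q v z.2 := by
  funext ⟨c, d⟩
  simp only [pushf, sum_mul_sum, ← sum_product', ← filter_product, univ_product_univ]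
  simp only [Prod.map, Prod.mk.injEq]

lemma Hent_comp_injective [Fintype α] [Fintype β] [DecidableEq α] [DecidableEq β]
    (μ : Ω → ℝ) (X : Ω → α) {g : α → β} (hg : Injective g) :
    Hent μ (fun ω => g (X ω)) = Hent μ X := by
  rw [Hent, Hent, pushf_comp, ent_pushf_injective _ hg]

def IndepPair [DecidableEq α] [DecidableEq β] (μ : Ω → ℝ) (U : Ω → α) (Z : Ω → β) : Prop :=
  pushf μ (fun ω => (U ω, Z ω)) = fun z => pushf μ U z.1 * pushf μ Z z.2

namespace IndepPair

variable [Fintype α] [Fintype β] [DecidableEq α] [DecidableEq β] {μ : Ω → ℝ}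
  {U : Ω → α} {Z : Ω → β}

lemma comp {δ : Type*} [DecidableEq γ] [DecidableEq δ] (h : IndepPair μ U Z) (u : α → γ)
    (v : β → δ) : IndepPair μ (fun ω => u (U ω)) (fun ω => v (Z ω)) := by
  rw [IndepPair, pushf_comp μ U, pushf_comp μ Z]
  exact (pushf_comp μ _ (Prod.map u v)).trans (by rw [h, pushf_prodMap_mul])

lemma symm (h : IndepPair μ U Z) : IndepPair μ Z U := by
  funext ⟨b, a⟩
  have hswap : pushf μ (fun ω => (Z ω, U ω)) = pushf (pushf μ fun ω => (U ω, Z ω)) Prod.swap :=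
    pushf_comp μ (fun ω => (U ω, Z ω)) Prod.swap
  rw [hswap, h, ← Prod.swap_prod_mk, pushf_apply_injective _ Prod.swap_injective]
  exact mul_comm _ _

lemma of_pushf_eq_mul (hμ : ∑ ω, μ ω = 1) {q : α → ℝ}
    (h : pushf μ (fun ω => (U ω, Z ω)) = fun z => q z.1 * pushf μ Z z.2) : IndepPair μ U Z := by
  have hU : pushf μ U = q := by
    rw [pushf_comp μ (fun ω => (U ω, Z ω)) Prod.fst, h, pushf_fst_mul, sum_pushf, hμ]
    simp only [mul_one]
  rwa [IndepPair, hU]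

lemma Hent_pair (hμ : ∑ ω, μ ω = 1) (h : IndepPair μ U Z) :
    Hent μ (fun ω => (U ω, Z ω)) = Hent μ U + Hent μ Z := by
  rw [Hent, h, ent_mul (by rwa [sum_pushf]) (by rwa [sum_pushf]), Hent, Hent]

lemma Hent_comp {δ ε : Type*} [Fintype γ] [Fintype δ] [Fintype ε] [DecidableEq γ]
    [DecidableEq δ] [DecidableEq ε] (hμ : ∑ ω, μ ω = 1) (h : IndepPair μ U Z) (u : α → γ)
    (v : β → δ) {g : γ × δ → ε} (hg : Injective g) :
    Hent μ (fun ω => g (u (U ω), v (Z ω)))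
      = Hent μ (fun ω => u (U ω)) + Hent μ (fun ω => v (Z ω)) := by
  rw [Hent_comp_injective μ (fun ω => (u (U ω), v (Z ω))) hg, (h.comp u v).Hent_pair hμ]

end IndepPair

section condMI

variable {α' β' γ' : Type*} [Fintype α] [Fintype β] [Fintype γ] [Fintype α'] [Fintype β']
  [Fintype γ'] [DecidableEq α] [DecidableEq β] [DecidableEq γ] [DecidableEq α']
  [DecidableEq β'] [DecidableEq γ'] (μ : Ω → ℝ) (A : Ω → α) (B : Ω → β) (C : Ω → γ)

lemma condMI_comp_injective {gA : α → α'} {gB : β → β'} {gC : γ → γ'} (hA : Injective gA)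
    (hB : Injective gB) (hC : Injective gC) :
    condMI μ (fun ω => gA (A ω)) (fun ω => gB (B ω)) (fun ω => gC (C ω)) = condMI μ A B C := by
  have hAB : Hent μ (fun ω => (gA (A ω), gB (B ω))) = Hent μ (fun ω => (A ω, B ω)) :=
    Hent_comp_injective μ (fun ω => (A ω, B ω)) (g := Prod.map gA gB) (hA.prodMap hB)
  have hBC : Hent μ (fun ω => (gB (B ω), gC (C ω))) = Hent μ (fun ω => (B ω, C ω)) :=
    Hent_comp_injective μ (fun ω => (B ω, C ω)) (g := Prod.map gB gC) (hB.prodMap hC)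
  have hABC : Hent μ (fun ω => (gA (A ω), gB (B ω), gC (C ω)))
      = Hent μ (fun ω => (A ω, B ω, C ω)) :=
    Hent_comp_injective μ (fun ω => (A ω, B ω, C ω)) (g := Prod.map gA (Prod.map gB gC))
      (hA.prodMap (hB.prodMap hC))
  rw [condMI, condMI, hAB, hBC, hABC, Hent_comp_injective μ B hB]

lemma condMI_const_left (a : α) : condMI μ (fun _ => a) B C = 0 := by
  have hB : Hent μ (fun ω => (a, B ω)) = Hent μ B :=
    Hent_comp_injective μ B (Prod.mk_right_injective a)
  have hBC : Hent μ (fun ω => (a, B ω, C ω)) = Hent μ (fun ω => (B ω, C ω)) :=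
    Hent_comp_injective μ (fun ω => (B ω, C ω)) (Prod.mk_right_injective a)
  rw [condMI, hB, hBC]
  ring

lemma condMI_const_right (c : γ) : condMI μ A B (fun _ => c) = 0 := by
  have hinj : Injective fun p : α × β => (p.1, p.2, c) := fun _ _ h => by
    simp only [Prod.mk.injEq] at h; exact Prod.ext h.1 h.2.1
  have hAB : Hent μ (fun ω => (A ω, B ω, c)) = Hent μ (fun ω => (A ω, B ω)) := by
    simpa only using Hent_comp_injective μ (fun ω => (A ω, B ω)) hinj
  have hB : Hent μ (fun ω => (B ω, c)) = Hent μ B :=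
    Hent_comp_injective μ B (g := fun b => (b, c)) (Prod.mk_left_injective c)
  rw [condMI, hB, hAB]
  ring

variable {μ A B C} {S : Ω → α'} {T : Ω → β'} {V : Ω → γ'}

lemma IndepPair.condMI_prod (hμ : ∑ ω, μ ω = 1)
    (h : IndepPair μ (fun ω => (A ω, B ω, C ω)) (fun ω => (S ω, T ω, V ω))) :
    condMI μ (fun ω => (A ω, S ω)) (fun ω => (B ω, T ω)) (fun ω => (C ω, V ω))
      = condMI μ A B C + condMI μ S T V := by
  have hAB : Hent μ (fun ω => ((A ω, S ω), (B ω, T ω)))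
      = Hent μ (fun ω => (A ω, B ω)) + Hent μ (fun ω => (S ω, T ω)) := by
    simpa only using h.Hent_comp hμ (fun x => (x.1, x.2.1)) (fun x => (x.1, x.2.1))
      (g := fun p => ((p.1.1, p.2.1), (p.1.2, p.2.2))) fun _ _ e => by simp_all [Prod.ext_iff]
  have hBC : Hent μ (fun ω => ((B ω, T ω), (C ω, V ω)))
      = Hent μ (fun ω => (B ω, C ω)) + Hent μ (fun ω => (T ω, V ω)) := by
    simpa only using h.Hent_comp hμ (fun x => x.2) (fun x => x.2)
      (g := fun p => ((p.1.1, p.2.1), (p.1.2, p.2.2))) fun _ _ e => by simp_all [Prod.ext_iff]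
  have hABC : Hent μ (fun ω => ((A ω, S ω), (B ω, T ω), (C ω, V ω)))
      = Hent μ (fun ω => (A ω, B ω, C ω)) + Hent μ (fun ω => (S ω, T ω, V ω)) := by
    simpa only using h.Hent_comp hμ (fun x => x) (fun x => x)
      (g := fun p => ((p.1.1, p.2.1), (p.1.2.1, p.2.2.1), (p.1.2.2, p.2.2.2)))
      fun _ _ e => by simp_all [Prod.ext_iff]
  have hB : Hent μ (fun ω => (B ω, T ω)) = Hent μ B + Hent μ T := by
    simpa only using (h.comp (fun x => x.2.1) (fun x => x.2.1)).Hent_pair hμ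
  rw [condMI, condMI, condMI, hAB, hBC, hABC, hB]
  ring

end condMI

lemma zip_fst_injective (ι 𝓕 𝒲 : Type*) : Injective fun p : ((ι → 𝓕) × β) × (ι → 𝒲) =>
    ((fun j => (p.1.1 j, p.2 j)), p.1.2) := fun p q hpq => by
  simp only [Prod.mk.injEq, funext_iff, forall_and] at hpq
  exact Prod.ext (Prod.ext (funext hpq.1.1) hpq.2) (funext hpq.1.2)

section Padding

variable {𝓕 𝒲 : Type*} [Fintype 𝓕] [Fintype 𝒲] [Fintype α] [Fintype β] [Fintype γ]
  [DecidableEq 𝓕] [DecidableEq 𝒲] [DecidableEq α] [DecidableEq β] [DecidableEq γ] {r : ℕ}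
  {μ : Ω → ℝ} (F : Fin r → Ω → 𝓕) (W : Fin r → Ω → 𝒲)

lemma condMI_padded_round (hμ : ∑ ω, μ ω = 1) {k : ℕ} (e : Fin k → Fin r) (i : Fin r)
    (B : Ω → β) (C : Ω → γ)
    (h : IndepPair μ (fun ω => ((fun j => F j ω), B ω, C ω)) (fun ω j => W j ω)) :
    condMI μ (fun ω => (F i ω, W i ω)) (fun ω => ((fun j => (F (e j) ω, W (e j) ω)), B ω)) C
      = condMI μ (F i) (fun ω => ((fun j => F (e j) ω), B ω)) C := by
  have hcode := condMI_comp_injective μ (fun ω => (F i ω, W i ω))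
    (fun ω => (((fun j => F (e j) ω), B ω), fun j => W (e j) ω)) (fun ω => (C ω, ()))
    (gA := id) injective_id (zip_fst_injective (Fin k) 𝓕 𝒲) Prod.fst_injective
  have hsplit := (h.comp (fun z => (z.1 i, ((fun j => z.1 (e j)), z.2.1), z.2.2))
    (fun w => (w i, (fun j => w (e j)), ()))).condMI_prod hμ
  rw [condMI_const_right, add_zero] at hsplit
  exact hcode.trans hsplit

lemma condMI_padded_mid (hμ : ∑ ω, μ ω = 1) (A : Ω → α) (B : Ω → β) (C : Ω → γ)
    (h : IndepPair μ (fun ω => (A ω, ((fun i => F i ω), B ω), C ω)) (fun ω i => W i ω)) :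
    condMI μ A (fun ω => ((fun i => (F i ω, W i ω)), B ω)) C
      = condMI μ A (fun ω => ((fun i => F i ω), B ω)) C := by
  have hcode := condMI_comp_injective μ (fun ω => (A ω, ()))
    (fun ω => (((fun i => F i ω), B ω), fun i => W i ω)) (fun ω => (C ω, ()))
    Prod.fst_injective (zip_fst_injective (Fin r) 𝓕 𝒲) Prod.fst_injective
  have hsplit := (h.comp (fun z => z) (fun w => ((), w, ()))).condMI_prod hμ
  rw [condMI_const_left, add_zero] at hsplit
  exact hcode.trans hsplit

lemma condMI_padded_left (hμ : ∑ ω, μ ω = 1) (B : Ω → β) (C : Ω → γ)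
    (h : IndepPair μ (fun ω => ((fun i => F i ω), B ω, C ω)) (fun ω i => W i ω)) :
    condMI μ (fun ω i => (F i ω, W i ω)) B C = condMI μ (fun ω i => F i ω) B C := by
  have hcode := condMI_comp_injective μ (fun ω => ((fun i => F i ω), fun i => W i ω))
    (fun ω => (B ω, ())) (fun ω => (C ω, ()))
    (Equiv.arrowProdEquivProdArrow (Fin r) _ _).symm.injective Prod.fst_injective
    Prod.fst_injective
  have hsplit := (h.comp (fun z => z) (fun w => (w, (), ()))).condMI_prod hμ
  rw [condMI_const_right, add_zero] at hsplit
  exact hcode.trans hsplit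

lemma condMI_padded_right (hμ : ∑ ω, μ ω = 1) (A : Ω → α) (B : Ω → β)
    (h : IndepPair μ (fun ω => (A ω, B ω, fun i => F i ω)) (fun ω i => W i ω)) :
    condMI μ A B (fun ω i => (F i ω, W i ω)) = condMI μ A B (fun ω i => F i ω) := by
  have hcode := condMI_comp_injective μ (fun ω => (A ω, ())) (fun ω => (B ω, ()))
    (fun ω => ((fun i => F i ω), fun i => W i ω)) Prod.fst_injective Prod.fst_injective
    (Equiv.arrowProdEquivProdArrow (Fin r) _ _).symm.injective
  have hsplit := (h.comp (fun z => z) (fun w => ((), (), w))).condMI_prod hμ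
  rw [condMI_const_left, add_zero] at hsplit
  exact hcode.trans hsplit

end Padding

end

set_option synthInstance.maxSize 2000
set_option synthInstance.maxHeartbeats 1000000

-- Round `i` of the paper is `i.val + 1`: the paper's odd rounds are those with `Even i.val`.
/-- if `F_{[1:r]}, X_{[1:2]}, Y_{[1:2]}` satisfy the Markov chains of
`T(r)` (paper-odd rounds are 0-indexed `Even i.val`) and `W_1,...,W_r` are mutually
independent of each other and of `(F_{[1:r]}, X_{[1:2]}, Y_{[1:2]})`, then
`F̄_i = (F_i, W_i)` also satisfy the Markov chains of `T(r)`, and the three mutual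
information quantities `I(X_1;F̄|X_2)`, `I(X_2;F̄|X_1)`, `I(F̄;Y_{[1:2]}|X_{[1:2]})`
are unchanged. -/
theorem padding_with_independent_randomness {Ω 𝓕 𝒲 𝒳₁ 𝒳₂ 𝒴₁ 𝒴₂ : Type*} {r : ℕ}
    [Fintype Ω] [Fintype 𝓕] [Fintype 𝒲] [Fintype 𝒳₁] [Fintype 𝒳₂]
    [Fintype 𝒴₁] [Fintype 𝒴₂]
    [DecidableEq 𝓕] [DecidableEq 𝒲] [DecidableEq 𝒳₁] [DecidableEq 𝒳₂]
    [DecidableEq 𝒴₁] [DecidableEq 𝒴₂]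
    (μ : Ω → ℝ) (hμ : IsPMF μ)
    (F : Fin r → Ω → 𝓕) (W : Fin r → Ω → 𝒲)
    (X1 : Ω → 𝒳₁) (X2 : Ω → 𝒳₂) (Y1 : Ω → 𝒴₁) (Y2 : Ω → 𝒴₂)
    (hodd : ∀ i : Fin r, Even i.val →
      condMI μ (F i)
        (fun ω => ((fun j : Fin i.val => F (Fin.castLE i.isLt.le j) ω), X1 ω)) X2 = 0)
    (heven : ∀ i : Fin r, Odd i.val →
      condMI μ (F i)
        (fun ω => ((fun j : Fin i.val => F (Fin.castLE i.isLt.le j) ω), X2 ω)) X1 = 0)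
    (hY1 : condMI μ Y1 (fun ω => ((fun i : Fin r => F i ω), X1 ω))
      (fun ω => (X2 ω, Y2 ω)) = 0)
    (hY2 : condMI μ Y2 (fun ω => ((fun i : Fin r => F i ω), X2 ω))
      (fun ω => (X1 ω, Y1 ω)) = 0)
    -- `W_1,...,W_r` are mutually independent and independent of everything else:
    (hind : pushf μ (fun ω => ((fun i : Fin r => W i ω),
        (X1 ω, X2 ω, Y1 ω, Y2 ω, fun i : Fin r => F i ω)))
      = fun z => (∏ i : Fin r, pushf μ (W i) (z.1 i)) *
          pushf μ (fun ω => (X1 ω, X2 ω, Y1 ω, Y2 ω, fun i : Fin r => F i ω)) z.2) :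
    (∀ i : Fin r, Even i.val →
      condMI μ (fun ω => (F i ω, W i ω))
        (fun ω => ((fun j : Fin i.val =>
            (F (Fin.castLE i.isLt.le j) ω, W (Fin.castLE i.isLt.le j) ω)), X1 ω))
        X2 = 0) ∧
    (∀ i : Fin r, Odd i.val →
      condMI μ (fun ω => (F i ω, W i ω))
        (fun ω => ((fun j : Fin i.val =>
            (F (Fin.castLE i.isLt.le j) ω, W (Fin.castLE i.isLt.le j) ω)), X2 ω))
        X1 = 0) ∧
    (condMI μ Y1 (fun ω => ((fun i : Fin r => (F i ω, W i ω)), X1 ω))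
      (fun ω => (X2 ω, Y2 ω)) = 0) ∧
    (condMI μ Y2 (fun ω => ((fun i : Fin r => (F i ω, W i ω)), X2 ω))
      (fun ω => (X1 ω, Y1 ω)) = 0) ∧
    condMI μ X1 X2 (fun ω => fun i : Fin r => (F i ω, W i ω))
      = condMI μ X1 X2 (fun ω => fun i : Fin r => F i ω) ∧
    condMI μ X2 X1 (fun ω => fun i : Fin r => (F i ω, W i ω))
      = condMI μ X2 X1 (fun ω => fun i : Fin r => F i ω) ∧
    condMI μ (fun ω => fun i : Fin r => (F i ω, W i ω))
        (fun ω => (X1 ω, X2 ω)) (fun ω => (Y1 ω, Y2 ω))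
      = condMI μ (fun ω => fun i : Fin r => F i ω)
          (fun ω => (X1 ω, X2 ω)) (fun ω => (Y1 ω, Y2 ω)) := by
  have hW : IndepPair μ (fun ω => (X1 ω, X2 ω, Y1 ω, Y2 ω, fun i => F i ω)) (fun ω i => W i ω) :=
    (IndepPair.of_pushf_eq_mul hμ.2 (q := fun w => ∏ i, pushf μ (W i) (w i)) hind).symm
  refine ⟨fun i hi => ?_, fun i hi => ?_, ?_, ?_, ?_, ?_, ?_⟩
  · rw [condMI_padded_round F W hμ.2 _ i X1 X2
      (hW.comp (fun z => (z.2.2.2.2, z.1, z.2.1)) fun w => w)]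
    exact hodd i hi
  · rw [condMI_padded_round F W hμ.2 _ i X2 X1
      (hW.comp (fun z => (z.2.2.2.2, z.2.1, z.1)) fun w => w)]
    exact heven i hi
  · rw [condMI_padded_mid F W hμ.2 Y1 X1 (fun ω => (X2 ω, Y2 ω))
      (hW.comp (fun z => (z.2.2.1, (z.2.2.2.2, z.1), (z.2.1, z.2.2.2.1))) fun w => w)]
    exact hY1
  · rw [condMI_padded_mid F W hμ.2 Y2 X2 (fun ω => (X1 ω, Y1 ω))
      (hW.comp (fun z => (z.2.2.2.1, (z.2.2.2.2, z.2.1), (z.1, z.2.2.1))) fun w => w)]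
    exact hY2
  · exact condMI_padded_right F W hμ.2 X1 X2 (hW.comp (fun z => (z.1, z.2.1, z.2.2.2.2)) fun w => w)
  · exact condMI_padded_right F W hμ.2 X2 X1 (hW.comp (fun z => (z.2.1, z.1, z.2.2.2.2)) fun w => w)
  · exact condMI_padded_left F W hμ.2 (fun ω => (X1 ω, X2 ω)) (fun ω => (Y1 ω, Y2 ω))
      (hW.comp (fun z => (z.2.2.2.2, (z.1, z.2.1), (z.2.2.1, z.2.2.2.1))) fun w => w)
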